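/- Let a_1, a_2, a_3, a_4, a_5, b be real numbers with 0 ≤ a_1 ≤ a_2 ≤ a_3 ≤ a_4 ≤ a_5 < 1 and b ≥ 0, and assume a_3 + a_4 + a_5 ≥ 2 + a_2. If a_2 − a_1 ≥ 0.8911, then H(a_1, …, a_5, b) < 0. -/
import Mathlib


/-- The Donaldson–Futaki polynomial `H` for polarizations of `ℙ¹ × ℙ¹`-type on a
smooth del Pezzo surface of degree `3` in the regime `a₃ + a₄ + a₅ ≥ 2 + a₂`. -/
noncomputable def Hpoly (a1 a2 a3 a4 a5 b : ℝ) : ℝ :=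
  let P := 3 + 2 * b + a1 + a2 + a3 + a4 + a5
  let Q := 3 + 4 * b + 2 * (a1 + a2 + a3 + a4 + a5) -
    (a1 ^ 2 + a2 ^ 2 + a3 ^ 2 + a4 ^ 2 + a5 ^ 2)
  (-P * ((2 + b + a1 + a2) ^ 3 + 3 * (1 - a1) * (2 + b + a1 + a2) ^ 2) +
    3 * ((2 + b + a1 + a2) ^ 2 + (1 - a1) * (2 + b + a1 + a2)) * Q +
    P * ((1 + b + a2) ^ 3 + (1 + a2) ^ 3 + (1 - a3) ^ 3 + (1 - a4) ^ 3 + (1 - a5) ^ 3))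

set_option maxHeartbeats 4000000 in
set_option maxRecDepth 100000 in
theorem Hpoly_negative (a1 a2 a3 a4 a5 b : ℝ)
    (h0 : 0 ≤ a1) (h12 : a1 ≤ a2) (h23 : a2 ≤ a3) (h34 : a3 ≤ a4) (h45 : a4 ≤ a5)
    (h5 : a5 < 1) (hb : 0 ≤ b) (hreg : a3 + a4 + a5 ≥ 2 + a2)
    (hgap : a2 - a1 ≥ 0.8911) :
    Hpoly a1 a2 a3 a4 a5 b < 0 := by
  have hx : (0:ℝ) ≤ a1 := h0
  have ht : (0:ℝ) ≤ a2 - a1 - 0.8911 := by linarith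
  have hy3 : (0:ℝ) ≤ a3 - a2 := by linarith
  have hy4 : (0:ℝ) ≤ a4 - a3 := by linarith
  have hy5 : (0:ℝ) ≤ a5 - a4 := by linarith
  have hr : (0:ℝ) ≤ a3 + a4 + a5 - 2 - a2 := by linarith
  have h2 : a2 ≥ 0.8911 := by linarith
  have h2u : a2 < 1 := by linarith
  have h1u : a1 ≤ 0.1089 := by linarith
  have hC0 : 9 + 12 * a5 - 12 * a5 ^ 2 - a5 ^ 4 + 12 * a4 - 6 * a4 * a5 + 3 * a4 * a5 ^ 2 - a4 * a5 ^ 3 - 12 * a4 ^ 2 + 3 * a4 ^ 2 * a5 - a4 ^ 3 * a5 - a4 ^ 4 + 12 * a3 - 6 * a3 * a5 + 3 * a3 * a5 ^ 2 - a3 * a5 ^ 3 - 6 * a3 * a4 + 3 * a3 * a4 ^ 2 - a3 * a4 ^ 3 - 12 * a3 ^ 2 + 3 * a3 ^ 2 * a5 + 3 * a3 ^ 2 * a4 - a3 ^ 3 * a5 - a3 ^ 3 * a4 - a3 ^ 4 + 12 * a2 + 9 * a2 * a5 - 12 * a2 * a5 ^ 2 - a2 * a5 ^ 3 + 9 * a2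 * a4 - 12 * a2 * a4 ^ 2 - a2 * a4 ^ 3 + 9 * a2 * a3 - 12 * a2 * a3 ^ 2 - a2 * a3 ^ 3 - 6 * a2 ^ 2 + 3 * a2 ^ 2 * a5 - 3 * a2 ^ 2 * a5 ^ 2 + 3 * a2 ^ 2 * a4 - 3 * a2 ^ 2 * a4 ^ 2 + 3 * a2 ^ 2 * a3 - 3 * a2 ^ 2 * a3 ^ 2 - 9 * a2 ^ 3 + a2 ^ 3 * a5 + a2 ^ 3 * a4 + a2 ^ 3 * a3 - 2 * a2 ^ 4 + 12 * a1 + 3 * a1 * a5 - 6 * a1 * a5 ^ 2 - a1 * a5 ^ 3 + 3 * a1 * a4 - 6 * a1 * a4 ^ 2 - a1 * a4 ^ 3 + 3 * a1 * a3 - 6 * a1 * a3 ^ 2 - a1 * a3 ^ 3 + 9 * a1 * a2 - 3 * a1 * a2 * a5 ^ 2 - 3 * a1 * a2 * a4 ^ 2 - 3 * a1 * a2 * a3 ^ 2 - 6 * a1 * a2 ^ 2 - 2 * a1 * a2 ^ 3 - 3 * a1 ^ 2 + 3 * a1 ^ 2 * a5 + 3 * a1 ^ 2 * a4 + 3 *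 a1 ^ 2 * a3 - 3 * a1 ^ 2 * a2 + 3 * a1 ^ 2 * a2 * a5 + 3 * a1 ^ 2 * a2 * a4 + 3 * a1 ^ 2 * a2 * a3 + 2 * a1 ^ 3 * a5 + 2 * a1 ^ 3 * a4 + 2 * a1 ^ 3 * a3 + 2 * a1 ^ 3 * a2 + 2 * a1 ^ 4 < 0 := by
    have q0 : (0:ℝ) ≤ (a5 - a4) ^ 2 := (pow_nonneg hy5 2)
    have q1 : (0:ℝ) ≤ (a5 - a4) ^ 3 := (pow_nonneg hy5 3)
    have q2 : (0:ℝ) ≤ (a5 - a4) ^ 4 := (pow_nonneg hy5 4)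
    have q3 : (0:ℝ) ≤ (a4 - a3) * (a5 - a4) := (mul_nonneg hy4 hy5)
    have q4 : (0:ℝ) ≤ (a4 - a3) * (a5 - a4) ^ 2 := (mul_nonneg hy4 (pow_nonneg hy5 2))
    have q5 : (0:ℝ) ≤ (a4 - a3) * (a5 - a4) ^ 3 := (mul_nonneg hy4 (pow_nonneg hy5 3))
    have q6 : (0:ℝ) ≤ (a4 - a3) ^ 2 := (pow_nonneg hy4 2)
    have q7 : (0:ℝ) ≤ (a4 - a3) ^ 2 * (a5 - a4) := (mul_nonneg (pow_nonneg hy4 2) hy5)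
    have q8 : (0:ℝ) ≤ (a4 - a3) ^ 2 * (a5 - a4) ^ 2 := (mul_nonneg (pow_nonneg hy4 2) (pow_nonneg hy5 2))
    have q9 : (0:ℝ) ≤ (a4 - a3) ^ 3 := (pow_nonneg hy4 3)
    have q10 : (0:ℝ) ≤ (a4 - a3) ^ 3 * (a5 - a4) := (mul_nonneg (pow_nonneg hy4 3) hy5)
    have q11 : (0:ℝ) ≤ (a4 - a3) ^ 4 := (pow_nonneg hy4 4)
    have q12 : (0:ℝ) ≤ (a3 - a2) * (a5 - a4) := (mul_nonneg hy3 hy5)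
    have q13 : (0:ℝ) ≤ (a3 - a2) * (a5 - a4) ^ 2 := (mul_nonneg hy3 (pow_nonneg hy5 2))
    have q14 : (0:ℝ) ≤ (a3 - a2) * (a5 - a4) ^ 3 := (mul_nonneg hy3 (pow_nonneg hy5 3))
    have q15 : (0:ℝ) ≤ (a3 - a2) * (a4 - a3) := (mul_nonneg hy3 hy4)
    have q16 : (0:ℝ) ≤ (a3 - a2) * (a4 - a3) * (a5 - a4) := (mul_nonneg (mul_nonneg hy3 hy4) hy5)
    have q17 : (0:ℝ) ≤ (a3 - a2) * (a4 - a3) * (a5 - a4) ^ 2 := (mul_nonneg (mul_nonneg hy3 hy4) (pow_nonneg hy5 2))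
    have q18 : (0:ℝ) ≤ (a3 - a2) * (a4 - a3) ^ 2 := (mul_nonneg hy3 (pow_nonneg hy4 2))
    have q19 : (0:ℝ) ≤ (a3 - a2) * (a4 - a3) ^ 2 * (a5 - a4) := (mul_nonneg (mul_nonneg hy3 (pow_nonneg hy4 2)) hy5)
    have q20 : (0:ℝ) ≤ (a3 - a2) * (a4 - a3) ^ 3 := (mul_nonneg hy3 (pow_nonneg hy4 3))
    have q21 : (0:ℝ) ≤ (a3 - a2) ^ 2 := (pow_nonneg hy3 2)
    have q22 : (0:ℝ) ≤ (a3 - a2) ^ 2 * (a5 - a4) := (mul_nonneg (pow_nonneg hy3 2) hy5)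
    have q23 : (0:ℝ) ≤ (a3 - a2) ^ 2 * (a5 - a4) ^ 2 := (mul_nonneg (pow_nonneg hy3 2) (pow_nonneg hy5 2))
    have q24 : (0:ℝ) ≤ (a3 - a2) ^ 2 * (a4 - a3) := (mul_nonneg (pow_nonneg hy3 2) hy4)
    have q25 : (0:ℝ) ≤ (a3 - a2) ^ 2 * (a4 - a3) * (a5 - a4) := (mul_nonneg (mul_nonneg (pow_nonneg hy3 2) hy4) hy5)
    have q26 : (0:ℝ) ≤ (a3 - a2) ^ 2 * (a4 - a3) ^ 2 := (mul_nonneg (pow_nonneg hy3 2) (pow_nonneg hy4 2))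
    have q27 : (0:ℝ) ≤ (a3 - a2) ^ 3 := (pow_nonneg hy3 3)
    have q28 : (0:ℝ) ≤ (a3 - a2) ^ 3 * (a5 - a4) := (mul_nonneg (pow_nonneg hy3 3) hy5)
    have q29 : (0:ℝ) ≤ (a3 - a2) ^ 3 * (a4 - a3) := (mul_nonneg (pow_nonneg hy3 3) hy4)
    have q30 : (0:ℝ) ≤ (a3 - a2) ^ 4 := (pow_nonneg hy3 4)
    have q31 : (0:ℝ) ≤ (a2 - a1 - 0.8911) * (a5 - a4) := (mul_nonneg ht hy5)
    have q32 : (0:ℝ) ≤ (a2 - a1 - 0.8911) * (a5 - a4) ^ 2 := (mul_nonneg ht (pow_nonneg hy5 2))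
    have q33 : (0:ℝ) ≤ (a2 - a1 - 0.8911) * (a5 - a4) ^ 3 := (mul_nonneg ht (pow_nonneg hy5 3))
    have q34 : (0:ℝ) ≤ (a2 - a1 - 0.8911) * (a4 - a3) := (mul_nonneg ht hy4)
    have q35 : (0:ℝ) ≤ (a2 - a1 - 0.8911) * (a4 - a3) * (a5 - a4) := (mul_nonneg (mul_nonneg ht hy4) hy5)
    have q36 : (0:ℝ) ≤ (a2 - a1 - 0.8911) * (a4 - a3) * (a5 - a4) ^ 2 := (mul_nonneg (mul_nonneg ht hy4) (pow_nonneg hy5 2))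
    have q37 : (0:ℝ) ≤ (a2 - a1 - 0.8911) * (a4 - a3) ^ 2 := (mul_nonneg ht (pow_nonneg hy4 2))
    have q38 : (0:ℝ) ≤ (a2 - a1 - 0.8911) * (a4 - a3) ^ 2 * (a5 - a4) := (mul_nonneg (mul_nonneg ht (pow_nonneg hy4 2)) hy5)
    have q39 : (0:ℝ) ≤ (a2 - a1 - 0.8911) * (a4 - a3) ^ 3 := (mul_nonneg ht (pow_nonneg hy4 3))
    have q40 : (0:ℝ) ≤ (a2 - a1 - 0.8911) * (a3 - a2) := (mul_nonneg ht hy3)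
    have q41 : (0:ℝ) ≤ (a2 - a1 - 0.8911) * (a3 - a2) * (a5 - a4) := (mul_nonneg (mul_nonneg ht hy3) hy5)
    have q42 : (0:ℝ) ≤ (a2 - a1 - 0.8911) * (a3 - a2) * (a5 - a4) ^ 2 := (mul_nonneg (mul_nonneg ht hy3) (pow_nonneg hy5 2))
    have q43 : (0:ℝ) ≤ (a2 - a1 - 0.8911) * (a3 - a2) * (a4 - a3) := (mul_nonneg (mul_nonneg ht hy3) hy4)
    have q44 : (0:ℝ) ≤ (a2 - a1 - 0.8911) * (a3 - a2) * (a4 - a3) * (a5 - a4) := (mul_nonneg (mul_nonneg (mul_nonneg ht hy3) hy4) hy5)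
    have q45 : (0:ℝ) ≤ (a2 - a1 - 0.8911) * (a3 - a2) * (a4 - a3) ^ 2 := (mul_nonneg (mul_nonneg ht hy3) (pow_nonneg hy4 2))
    have q46 : (0:ℝ) ≤ (a2 - a1 - 0.8911) * (a3 - a2) ^ 2 := (mul_nonneg ht (pow_nonneg hy3 2))
    have q47 : (0:ℝ) ≤ (a2 - a1 - 0.8911) * (a3 - a2) ^ 2 * (a5 - a4) := (mul_nonneg (mul_nonneg ht (pow_nonneg hy3 2)) hy5)
    have q48 : (0:ℝ) ≤ (a2 - a1 - 0.8911) * (a3 - a2) ^ 2 * (a4 - a3) := (mul_nonneg (mul_nonneg ht (pow_nonneg hy3 2)) hy4)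
    have q49 : (0:ℝ) ≤ (a2 - a1 - 0.8911) * (a3 - a2) ^ 3 := (mul_nonneg ht (pow_nonneg hy3 3))
    have q50 : (0:ℝ) ≤ (a2 - a1 - 0.8911) ^ 2 := (pow_nonneg ht 2)
    have q51 : (0:ℝ) ≤ (a2 - a1 - 0.8911) ^ 2 * (a5 - a4) := (mul_nonneg (pow_nonneg ht 2) hy5)
    have q52 : (0:ℝ) ≤ (a2 - a1 - 0.8911) ^ 2 * (a5 - a4) ^ 2 := (mul_nonneg (pow_nonneg ht 2) (pow_nonneg hy5 2))
    have q53 : (0:ℝ) ≤ (a2 - a1 - 0.8911) ^ 2 * (a4 - a3) := (mul_nonneg (pow_nonneg ht 2) hy4)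
    have q54 : (0:ℝ) ≤ (a2 - a1 - 0.8911) ^ 2 * (a4 - a3) * (a5 - a4) := (mul_nonneg (mul_nonneg (pow_nonneg ht 2) hy4) hy5)
    have q55 : (0:ℝ) ≤ (a2 - a1 - 0.8911) ^ 2 * (a4 - a3) ^ 2 := (mul_nonneg (pow_nonneg ht 2) (pow_nonneg hy4 2))
    have q56 : (0:ℝ) ≤ (a2 - a1 - 0.8911) ^ 2 * (a3 - a2) := (mul_nonneg (pow_nonneg ht 2) hy3)
    have q57 : (0:ℝ) ≤ (a2 - a1 - 0.8911) ^ 2 * (a3 - a2) * (a5 - a4) := (mul_nonneg (mul_nonneg (pow_nonneg ht 2) hy3) hy5)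
    have q58 : (0:ℝ) ≤ (a2 - a1 - 0.8911) ^ 2 * (a3 - a2) * (a4 - a3) := (mul_nonneg (mul_nonneg (pow_nonneg ht 2) hy3) hy4)
    have q59 : (0:ℝ) ≤ (a2 - a1 - 0.8911) ^ 2 * (a3 - a2) ^ 2 := (mul_nonneg (pow_nonneg ht 2) (pow_nonneg hy3 2))
    have q60 : (0:ℝ) ≤ (a2 - a1 - 0.8911) ^ 3 := (pow_nonneg ht 3)
    have q61 : (0:ℝ) ≤ (a2 - a1 - 0.8911) ^ 3 * (a5 - a4) := (mul_nonneg (pow_nonneg ht 3) hy5)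
    have q62 : (0:ℝ) ≤ (a2 - a1 - 0.8911) ^ 3 * (a4 - a3) := (mul_nonneg (pow_nonneg ht 3) hy4)
    have q63 : (0:ℝ) ≤ (a2 - a1 - 0.8911) ^ 3 * (a3 - a2) := (mul_nonneg (pow_nonneg ht 3) hy3)
    have q64 : (0:ℝ) ≤ (a2 - a1 - 0.8911) ^ 4 := (pow_nonneg ht 4)
    have q65 : (0:ℝ) ≤ a1 * (a5 - a4) := (mul_nonneg hx hy5)
    have q66 : (0:ℝ) ≤ a1 * (a5 - a4) ^ 2 := (mul_nonneg hx (pow_nonneg hy5 2))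
    have q67 : (0:ℝ) ≤ a1 * (a5 - a4) ^ 3 := (mul_nonneg hx (pow_nonneg hy5 3))
    have q68 : (0:ℝ) ≤ a1 * (a4 - a3) := (mul_nonneg hx hy4)
    have q69 : (0:ℝ) ≤ a1 * (a4 - a3) * (a5 - a4) := (mul_nonneg (mul_nonneg hx hy4) hy5)
    have q70 : (0:ℝ) ≤ a1 * (a4 - a3) * (a5 - a4) ^ 2 := (mul_nonneg (mul_nonneg hx hy4) (pow_nonneg hy5 2))
    have q71 : (0:ℝ) ≤ a1 * (a4 - a3) ^ 2 := (mul_nonneg hx (pow_nonneg hy4 2))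
    have q72 : (0:ℝ) ≤ a1 * (a4 - a3) ^ 2 * (a5 - a4) := (mul_nonneg (mul_nonneg hx (pow_nonneg hy4 2)) hy5)
    have q73 : (0:ℝ) ≤ a1 * (a4 - a3) ^ 3 := (mul_nonneg hx (pow_nonneg hy4 3))
    have q74 : (0:ℝ) ≤ a1 * (a3 - a2) := (mul_nonneg hx hy3)
    have q75 : (0:ℝ) ≤ a1 * (a3 - a2) * (a5 - a4) := (mul_nonneg (mul_nonneg hx hy3) hy5)
    have q76 : (0:ℝ) ≤ a1 * (a3 - a2) * (a5 - a4) ^ 2 := (mul_nonneg (mul_nonneg hx hy3) (pow_nonneg hy5 2))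
    have q77 : (0:ℝ) ≤ a1 * (a3 - a2) * (a4 - a3) := (mul_nonneg (mul_nonneg hx hy3) hy4)
    have q78 : (0:ℝ) ≤ a1 * (a3 - a2) * (a4 - a3) * (a5 - a4) := (mul_nonneg (mul_nonneg (mul_nonneg hx hy3) hy4) hy5)
    have q79 : (0:ℝ) ≤ a1 * (a3 - a2) * (a4 - a3) ^ 2 := (mul_nonneg (mul_nonneg hx hy3) (pow_nonneg hy4 2))
    have q80 : (0:ℝ) ≤ a1 * (a3 - a2) ^ 2 := (mul_nonneg hx (pow_nonneg hy3 2))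
    have q81 : (0:ℝ) ≤ a1 * (a3 - a2) ^ 2 * (a5 - a4) := (mul_nonneg (mul_nonneg hx (pow_nonneg hy3 2)) hy5)
    have q82 : (0:ℝ) ≤ a1 * (a3 - a2) ^ 2 * (a4 - a3) := (mul_nonneg (mul_nonneg hx (pow_nonneg hy3 2)) hy4)
    have q83 : (0:ℝ) ≤ a1 * (a3 - a2) ^ 3 := (mul_nonneg hx (pow_nonneg hy3 3))
    have q84 : (0:ℝ) ≤ a1 * (a2 - a1 - 0.8911) := (mul_nonneg hx ht)
    have q85 : (0:ℝ) ≤ a1 * (a2 - a1 - 0.8911) * (a5 - a4) := (mul_nonneg (mul_nonneg hx ht) hy5)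
    have q86 : (0:ℝ) ≤ a1 * (a2 - a1 - 0.8911) * (a5 - a4) ^ 2 := (mul_nonneg (mul_nonneg hx ht) (pow_nonneg hy5 2))
    have q87 : (0:ℝ) ≤ a1 * (a2 - a1 - 0.8911) * (a4 - a3) := (mul_nonneg (mul_nonneg hx ht) hy4)
    have q88 : (0:ℝ) ≤ a1 * (a2 - a1 - 0.8911) * (a4 - a3) * (a5 - a4) := (mul_nonneg (mul_nonneg (mul_nonneg hx ht) hy4) hy5)
    have q89 : (0:ℝ) ≤ a1 * (a2 - a1 - 0.8911) * (a4 - a3) ^ 2 := (mul_nonneg (mul_nonneg hx ht) (pow_nonneg hy4 2))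
    have q90 : (0:ℝ) ≤ a1 * (a2 - a1 - 0.8911) * (a3 - a2) := (mul_nonneg (mul_nonneg hx ht) hy3)
    have q91 : (0:ℝ) ≤ a1 * (a2 - a1 - 0.8911) * (a3 - a2) * (a5 - a4) := (mul_nonneg (mul_nonneg (mul_nonneg hx ht) hy3) hy5)
    have q92 : (0:ℝ) ≤ a1 * (a2 - a1 - 0.8911) * (a3 - a2) * (a4 - a3) := (mul_nonneg (mul_nonneg (mul_nonneg hx ht) hy3) hy4)
    have q93 : (0:ℝ) ≤ a1 * (a2 - a1 - 0.8911) * (a3 - a2) ^ 2 := (mul_nonneg (mul_nonneg hx ht) (pow_nonneg hy3 2))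
    have q94 : (0:ℝ) ≤ a1 * (a2 - a1 - 0.8911) ^ 2 := (mul_nonneg hx (pow_nonneg ht 2))
    have q95 : (0:ℝ) ≤ a1 * (a2 - a1 - 0.8911) ^ 2 * (a5 - a4) := (mul_nonneg (mul_nonneg hx (pow_nonneg ht 2)) hy5)
    have q96 : (0:ℝ) ≤ a1 * (a2 - a1 - 0.8911) ^ 2 * (a4 - a3) := (mul_nonneg (mul_nonneg hx (pow_nonneg ht 2)) hy4)
    have q97 : (0:ℝ) ≤ a1 * (a2 - a1 - 0.8911) ^ 2 * (a3 - a2) := (mul_nonneg (mul_nonneg hx (pow_nonneg ht 2)) hy3)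
    have q98 : (0:ℝ) ≤ a1 * (a2 - a1 - 0.8911) ^ 3 := (mul_nonneg hx (pow_nonneg ht 3))
    have q99 : (0:ℝ) ≤ a1 ^ 2 := (pow_nonneg hx 2)
    have q100 : (0:ℝ) ≤ a1 ^ 2 * (a5 - a4) := (mul_nonneg (pow_nonneg hx 2) hy5)
    have q101 : (0:ℝ) ≤ a1 ^ 2 * (a5 - a4) ^ 2 := (mul_nonneg (pow_nonneg hx 2) (pow_nonneg hy5 2))
    have q102 : (0:ℝ) ≤ a1 ^ 2 * (a4 - a3) := (mul_nonneg (pow_nonneg hx 2) hy4)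
    have q103 : (0:ℝ) ≤ a1 ^ 2 * (a4 - a3) * (a5 - a4) := (mul_nonneg (mul_nonneg (pow_nonneg hx 2) hy4) hy5)
    have q104 : (0:ℝ) ≤ a1 ^ 2 * (a4 - a3) ^ 2 := (mul_nonneg (pow_nonneg hx 2) (pow_nonneg hy4 2))
    have q105 : (0:ℝ) ≤ a1 ^ 2 * (a3 - a2) := (mul_nonneg (pow_nonneg hx 2) hy3)
    have q106 : (0:ℝ) ≤ a1 ^ 2 * (a3 - a2) * (a5 - a4) := (mul_nonneg (mul_nonneg (pow_nonneg hx 2) hy3) hy5)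
    have q107 : (0:ℝ) ≤ a1 ^ 2 * (a3 - a2) * (a4 - a3) := (mul_nonneg (mul_nonneg (pow_nonneg hx 2) hy3) hy4)
    have q108 : (0:ℝ) ≤ a1 ^ 2 * (a3 - a2) ^ 2 := (mul_nonneg (pow_nonneg hx 2) (pow_nonneg hy3 2))
    have q109 : (0:ℝ) ≤ a1 ^ 2 * (a2 - a1 - 0.8911) := (mul_nonneg (pow_nonneg hx 2) ht)
    have q110 : (0:ℝ) ≤ a1 ^ 2 * (a2 - a1 - 0.8911) * (a5 - a4) := (mul_nonneg (mul_nonneg (pow_nonneg hx 2) ht) hy5)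
    have q111 : (0:ℝ) ≤ a1 ^ 2 * (a2 - a1 - 0.8911) * (a4 - a3) := (mul_nonneg (mul_nonneg (pow_nonneg hx 2) ht) hy4)
    have q112 : (0:ℝ) ≤ a1 ^ 2 * (a2 - a1 - 0.8911) * (a3 - a2) := (mul_nonneg (mul_nonneg (pow_nonneg hx 2) ht) hy3)
    have q113 : (0:ℝ) ≤ a1 ^ 2 * (a2 - a1 - 0.8911) ^ 2 := (mul_nonneg (pow_nonneg hx 2) (pow_nonneg ht 2))
    have q114 : (0:ℝ) ≤ a1 ^ 3 := (pow_nonneg hx 3)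
    have q115 : (0:ℝ) ≤ a1 ^ 3 * (a5 - a4) := (mul_nonneg (pow_nonneg hx 3) hy5)
    have q116 : (0:ℝ) ≤ a1 ^ 3 * (a4 - a3) := (mul_nonneg (pow_nonneg hx 3) hy4)
    have q117 : (0:ℝ) ≤ a1 ^ 3 * (a3 - a2) := (mul_nonneg (pow_nonneg hx 3) hy3)
    have q118 : (0:ℝ) ≤ a1 ^ 3 * (a2 - a1 - 0.8911) := (mul_nonneg (pow_nonneg hx 3) ht)
    have q119 : (0:ℝ) ≤ a1 ^ 4 := (pow_nonneg hx 4)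

    linarith [q0, q1, q2, q3, q4, q5, q6, q7, q8, q9, q10, q11, q12, q13, q14, q15, q16, q17, q18, q19, q20, q21, q22, q23, q24, q25, q26, q27, q28, q29, q30, q31, q32, q33, q34, q35, q36, q37, q38, q39, q40, q41, q42, q43, q44, q45, q46, q47, q48, q49, q50, q51, q52, q53, q54, q55, q56, q57, q58, q59, q60, q61, q62, q63, q64, q65, q66, q67, q68, q69, q70, q71, q72, q73, q74, q75, q76, q77, q78, q79, q80, q81, q82, q83, q84, q85, q86, q87, q88, q89, q90, q91, q92, q93, q94, q95, q96, q97, q98, q99, q100, q101, q102, q103, q104, q105, q106, q107, q108, q109, q110, q111, q112, q113, q114, q115, q116, q117, q118, q119]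
  have hC1 : 24 + 3 * a5 - 9 * a5 ^ 2 - 2 * a5 ^ 3 + 3 * a4 - 9 * a4 ^ 2 - 2 * a4 ^ 3 + 3 * a3 - 9 * a3 ^ 2 - 2 * a3 ^ 3 + 15 * a2 - 6 * a2 * a5 ^ 2 - 6 * a2 * a4 ^ 2 - 6 * a2 * a3 ^ 2 - 9 * a2 ^ 2 - 4 * a2 ^ 3 + 12 * a1 - 3 * a1 * a5 ^ 2 - 3 * a1 * a4 ^ 2 - 3 * a1 * a3 ^ 2 - 3 * a1 * a2 ^ 2 + 3 * a1 ^ 2 * a5 + 3 * a1 ^ 2 * a4 + 3 * a1 ^ 2 * a3 + 3 * a1 ^ 2 * a2 + 4 * a1 ^ 3 ≤ 0 := by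
    nlinarith [sq_nonneg (a3-a4), sq_nonneg (a3-a5), sq_nonneg (a4-a5), mul_nonneg h0 h0, sq_nonneg (a3+a4+a5-(2+a2)), mul_nonneg (mul_nonneg h0 h0) h0, mul_nonneg h0 (sub_nonneg.2 h12), mul_nonneg (sub_nonneg.2 h23) (sub_nonneg.2 h34), mul_nonneg (le_of_lt (sub_pos.2 h5)) (sub_nonneg.2 h45)]
  have hC2 : 9 - 3 * a5 ^ 2 - 3 * a4 ^ 2 - 3 * a3 ^ 2 - 3 * a2 ^ 2 + 3 * a1 ^ 2 ≤ 0 := by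
    nlinarith [sq_nonneg (a3-a4), sq_nonneg (a3-a5), sq_nonneg (a4-a5), sq_nonneg (a2-a1), mul_nonneg h0 h0, sq_nonneg (a3+a4+a5-(2+a2))]
  have hb2 : (0:ℝ) ≤ b ^ 2 := sq_nonneg b
  have hB1 : (24 + 3 * a5 - 9 * a5 ^ 2 - 2 * a5 ^ 3 + 3 * a4 - 9 * a4 ^ 2 - 2 * a4 ^ 3 + 3 * a3 - 9 * a3 ^ 2 - 2 * a3 ^ 3 + 15 * a2 - 6 * a2 * a5 ^ 2 - 6 * a2 * a4 ^ 2 - 6 * a2 * a3 ^ 2 - 9 * a2 ^ 2 - 4 * a2 ^ 3 + 12 * a1 - 3 * a1 * a5 ^ 2 - 3 * a1 * a4 ^ 2 - 3 * a1 * a3 ^ 2 - 3 * a1 * a2 ^ 2 + 3 * a1 ^ 2 * a5 + 3 * a1 ^ 2 * a4 + 3 * a1 ^ 2 * a3 + 3 * a1 ^ 2 * a2 + 4 * a1 ^ 3) * b ≤ 0 := mul_nonpos_of_nonpos_of_nonneg hC1 hb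
  have hB2 : (9 - 3 * a5 ^ 2 - 3 * a4 ^ 2 - 3 * a3 ^ 2 - 3 * a2 ^ 2 + 3 * a1 ^ 2) * b ^ 2 ≤ 0 := mul_nonpos_of_nonpos_of_nonneg hC2 hb2
  have hH : Hpoly a1 a2 a3 a4 a5 b = (9 + 12 * a5 - 12 * a5 ^ 2 - a5 ^ 4 + 12 * a4 - 6 * a4 * a5 + 3 * a4 * a5 ^ 2 - a4 * a5 ^ 3 - 12 * a4 ^ 2 + 3 * a4 ^ 2 * a5 - a4 ^ 3 * a5 - a4 ^ 4 + 12 * a3 - 6 * a3 * a5 + 3 * a3 * a5 ^ 2 - a3 * a5 ^ 3 - 6 * a3 * a4 + 3 * a3 * a4 ^ 2 - a3 * a4 ^ 3 - 12 * a3 ^ 2 + 3 * a3 ^ 2 * a5 + 3 * a3 ^ 2 * a4 - a3 ^ 3 * a5 - a3 ^ 3 * a4 - a3 ^ 4 + 12 * a2 + 9 * a2 * a5 - 12 * a2 * a5 ^ 2 - a2 * a5 ^ 3 + 9 * a2 * a4 - 12 * a2 * a4 ^ 2 - a2 * a4 ^ 3 + 9 * a2 * a3 - 12 * a2 * a3 ^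 2 - a2 * a3 ^ 3 - 6 * a2 ^ 2 + 3 * a2 ^ 2 * a5 - 3 * a2 ^ 2 * a5 ^ 2 + 3 * a2 ^ 2 * a4 - 3 * a2 ^ 2 * a4 ^ 2 + 3 * a2 ^ 2 * a3 - 3 * a2 ^ 2 * a3 ^ 2 - 9 * a2 ^ 3 + a2 ^ 3 * a5 + a2 ^ 3 * a4 + a2 ^ 3 * a3 - 2 * a2 ^ 4 + 12 * a1 + 3 * a1 * a5 - 6 * a1 * a5 ^ 2 - a1 * a5 ^ 3 + 3 * a1 * a4 - 6 * a1 * a4 ^ 2 - a1 * a4 ^ 3 + 3 * a1 * a3 - 6 * a1 * a3 ^ 2 - a1 * a3 ^ 3 + 9 * a1 * a2 - 3 * a1 * a2 * a5 ^ 2 - 3 * a1 * a2 * a4 ^ 2 - 3 * a1 * a2 * a3 ^ 2 - 6 * a1 * a2 ^ 2 - 2 * a1 * a2 ^ 3 - 3 * a1 ^ 2 + 3 * a1 ^ 2 * a5 + 3 * a1 ^ 2 * a4 + 3 * a1 ^ 2 * a3 - 3 * a1 ^ 2 * a2 + 3 * a1 ^ 2 * a2 * a5 + 3 * a1 ^ 2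 * a2 * a4 + 3 * a1 ^ 2 * a2 * a3 + 2 * a1 ^ 3 * a5 + 2 * a1 ^ 3 * a4 + 2 * a1 ^ 3 * a3 + 2 * a1 ^ 3 * a2 + 2 * a1 ^ 4) + (24 + 3 * a5 - 9 * a5 ^ 2 - 2 * a5 ^ 3 + 3 * a4 - 9 * a4 ^ 2 - 2 * a4 ^ 3 + 3 * a3 - 9 * a3 ^ 2 - 2 * a3 ^ 3 + 15 * a2 - 6 * a2 * a5 ^ 2 - 6 * a2 * a4 ^ 2 - 6 * a2 * a3 ^ 2 - 9 * a2 ^ 2 - 4 * a2 ^ 3 + 12 * a1 - 3 * a1 * a5 ^ 2 - 3 * a1 * a4 ^ 2 - 3 * a1 * a3 ^ 2 - 3 * a1 * a2 ^ 2 + 3 * a1 ^ 2 * a5 + 3 * a1 ^ 2 * a4 + 3 * a1 ^ 2 * a3 + 3 * a1 ^ 2 * a2 + 4 * a1 ^ 3) * b + (9 - 3 * a5 ^ 2 - 3 * a4 ^ 2 - 3 * a3 ^ 2 - 3 * a2 ^ 2 + 3 * a1 ^ 2) * b ^ 2 := by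
    unfold Hpoly; ring
  rw [hH]
  linarith [hC0, hB1, hB2]
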